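/- Let X be a metrizable topological space and let E be an H₁-retract of X. Then E is a Gδ-set in X (a countable intersection of open sets). -/

import Mathlib

/-- A set is an Fσ-set if it is a countable union of closed sets. -/
def IsFsigma {X : Type*} [TopologicalSpace X] (A : Set X) : Prop :=
  ∃ F : ℕ → Set X, (∀ n, IsClosed (F n)) ∧ A = ⋃ n, F n

/-- A mapping is of the first Lebesgue class if the preimage of every open set is Fσ. -/
def LebesgueClassOne {X Y : Type*} [TopologicalSpace X] [TopologicalSpace Y] (g : X → Y) : Prop :=
  ∀ V : Set Y, IsOpen V → IsFsigma (g ⁻¹' V)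

/-- `E` is an H₁-retract of `X` if there is a first Lebesgue class map `r : X → E`
fixing the points of `E`. -/
def IsH1Retract {X : Type*} [TopologicalSpace X] (E : Set X) : Prop :=
  ∃ r : X → E, (∀ x : E, r x = x) ∧ LebesgueClassOne r


/-! The complement of `E` is the set where `x ≠ r x`. Cover `X` by a locally finite family
of closed sets `v c ⊆ closedBall c ε` (paracompactness of metric spaces). A point `x` with
`d(x, r x) > 3ε` lies in some `v c` with `r x` in the open set `{y | 2ε < d(y, c)}`, and conversely
every such point is moved by `r`. Since `r` is of the first class, the preimages of these open
sets are Fσ, and a locally finite union of closed sets is closed, so `Eᶜ` is a countable union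
of closed sets. -/

open Set Metric

section

variable {X Y : Type*} [TopologicalSpace X]

theorem isFsigma_iff_isGδ_compl {A : Set X} : IsFsigma A ↔ IsGδ Aᶜ := by
  rw [isGδ_iff_eq_iInter_nat]
  constructor
  · rintro ⟨F, hF, rfl⟩
    exact ⟨fun n => (F n)ᶜ, fun n => (hF n).isOpen_compl, compl_iUnion F⟩
  · rintro ⟨U, hU, hAU⟩
    refine ⟨fun n => (U n)ᶜ, fun n => (hU n).isClosed_compl, ?_⟩
    rw [← compl_iInter, ← hAU, compl_compl]

theorem IsClosed.isFsigma {A : Set X} (hA : IsClosed A) : IsFsigma A :=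
  ⟨fun _ => A, fun _ => hA, (iUnion_const A).symm⟩

theorem IsFsigma.iUnion {ι : Sort*} [Countable ι] {A : ι → Set X} (hA : ∀ i, IsFsigma (A i)) :
    IsFsigma (⋃ i, A i) := by
  rw [isFsigma_iff_isGδ_compl, compl_iUnion]
  exact IsGδ.iInter fun i => isFsigma_iff_isGδ_compl.1 (hA i)

theorem LocallyFinite.isFsigma_iUnion_inter {ι : Type*} {s A : ι → Set X}
    (hs : LocallyFinite s) (hs_closed : ∀ i, IsClosed (s i)) (hA : ∀ i, IsFsigma (A i)) :
    IsFsigma (⋃ i, s i ∩ A i) := by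
  choose F hF hAF using hA
  have hunion : ⋃ i, s i ∩ A i = ⋃ m, ⋃ i, s i ∩ F i m := by
    simp only [hAF, inter_iUnion]
    exact iUnion_comm _
  rw [hunion]
  exact IsFsigma.iUnion fun m => IsClosed.isFsigma <|
    (hs.subset fun i => inter_subset_left).isClosed_iUnion fun i => (hs_closed i).inter (hF i m)

theorem LebesgueClassOne.continuous_comp {Z : Type*} [TopologicalSpace Y] [TopologicalSpace Z]
    {g : X → Y} {f : Y → Z} (hg : LebesgueClassOne g) (hf : Continuous f) :
    LebesgueClassOne (f ∘ g) :=
  fun _ hV => hg _ (hV.preimage hf)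

theorem exists_locallyFinite_isClosed_cover_subset_closedBall [PseudoMetricSpace Y] {ε : ℝ}
    (hε : 0 < ε) : ∃ v : Y → Set Y, LocallyFinite v ∧ (∀ c, IsClosed (v c)) ∧
      (⋃ c, v c = univ) ∧ ∀ c, v c ⊆ closedBall c ε := by
  obtain ⟨v, -, hv_cover, hv_lf, hv_ball⟩ := precise_refinement (fun c : Y => ball c ε)
    (fun _ => isOpen_ball) (iUnion_eq_univ_iff.2 fun y => ⟨y, mem_ball_self hε⟩)
  refine ⟨fun c => closure (v c), hv_lf.closure, fun _ => isClosed_closure,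
    univ_subset_iff.1 ?_, fun c => closure_minimal ((hv_ball c).trans ball_subset_closedBall)
      isClosed_closedBall⟩
  rw [← hv_cover]
  exact iUnion_mono fun _ => subset_closure

theorem LebesgueClassOne.isFsigma_setOf_ne [MetricSpace Y] {f g : X → Y}
    (hg : LebesgueClassOne g) (hf : Continuous f) : IsFsigma {x | g x ≠ f x} := by
  choose v hv_lf hv_closed hv_cover hv_ball using fun n : ℕ =>
    exists_locallyFinite_isClosed_cover_subset_closedBall (Y := Y) (Nat.one_div_pos_of_nat (n := n))
  have hne : {x | g x ≠ f x} =
      ⋃ n : ℕ, ⋃ c, f ⁻¹' v n c ∩ g ⁻¹' {y | 2 * (1 / (n + 1 : ℝ)) < dist y c} := by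
    ext x
    simp only [mem_ofPred_eq, mem_iUnion, mem_inter_iff, mem_preimage]
    constructor
    · intro hgf
      obtain ⟨n, hn⟩ := exists_nat_one_div_lt (div_pos (dist_pos.2 hgf) three_pos)
      obtain ⟨c, hc⟩ := mem_iUnion.1 (hv_cover n ▸ mem_univ (f x))
      have hfc := mem_closedBall'.1 (hv_ball n c hc)
      refine ⟨n, c, hc, ?_⟩
      linarith [dist_triangle (g x) c (f x)]
    · rintro ⟨n, c, hc, hgc⟩ hgf
      have hfc := mem_closedBall.1 (hv_ball n c hc)
      rw [hgf] at hgc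
      linarith [Nat.one_div_pos_of_nat (α := ℝ) (n := n)]
  rw [hne]
  exact IsFsigma.iUnion fun n => ((hv_lf n).preimage_continuous hf).isFsigma_iUnion_inter
    (fun c => (hv_closed n c).preimage hf)
    fun c => hg _ (isOpen_lt continuous_const (continuous_id.dist continuous_const))

end

/-- An H₁-retract of a metrizable space is a Gδ-set. -/
theorem isGδ_of_isH1Retract {X : Type*} [TopologicalSpace X]
    [TopologicalSpace.MetrizableSpace X] {E : Set X}
    (h : IsH1Retract E) : IsGδ E := by
  let _ : MetricSpace X := TopologicalSpace.metrizableSpaceMetric X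
  obtain ⟨r, hr_fix, hr⟩ := h
  have hE : E = {x | (Subtype.val ∘ r) x ≠ id x}ᶜ := by
    ext x
    refine ⟨fun hx => not_not.2 (congrArg Subtype.val (hr_fix ⟨x, hx⟩)), fun hx => ?_⟩
    have hrx : (r x : X) = x := not_not.1 hx
    exact hrx ▸ (r x).2
  rw [hE]
  exact isFsigma_iff_isGδ_compl.1
    ((hr.continuous_comp continuous_subtype_val).isFsigma_setOf_ne continuous_id)
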